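/- Let S = {s₁, ..., s_t} ⊆ BS⁺(1,2) with t ≥ 2, where sᵢ = b^{mᵢ}·a^{xᵢ}, 1 ≤ m₁ < m₂ < ... < m_t, and the xᵢ are integers. If S generates a non-abelian subgroup, then |S²| ≥ 4|S| − 4. -/

import Mathlib

open Pointwise

def BSRel (n : ℤ) : Set (FreeGroup Bool) :=
  {FreeGroup.of true * FreeGroup.of false * (FreeGroup.of false * FreeGroup.of true ^ n)⁻¹}

/-- The Baumslag–Solitar group `BS(1,n) = ⟨a, b ∣ a b = b aⁿ⟩`. -/
abbrev BS (n : ℤ) : Type := PresentedGroup (BSRel n)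

noncomputable instance (n : ℤ) : DecidableEq (BS n) := Classical.decEq _

/-- The generator `a` of `BS(1,n)`. -/
def bsa (n : ℤ) : BS n := PresentedGroup.of true

/-- The generator `b` of `BS(1,n)`. -/
def bsb (n : ℤ) : BS n := PresentedGroup.of false

/-!
Write `sᵢ = b^{mᵢ} a^{xᵢ}`. Under the affine action `a : q ↦ q + 1`, `b : q ↦ q / 2` of `BS(1,2)` on
`ℚ`, the element `bᴹ aˣ` (with `M ≥ 1`) is the contraction `q ↦ (q + x) / 2ᴹ`, with fixed point
`x / (2ᴹ - 1)`, and it is determined by `M` and `x`. Let `λᵢ` be the fixed point of `sᵢ`. The fixed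
point of `sᵢ sⱼ` lies strictly between `λᵢ` and `λⱼ`, and it differs from that of `sⱼ sᵢ` unless
`λᵢ = λⱼ`; in particular `S` generates an abelian group iff all `λᵢ` coincide. Hence `|S²|` is at
least the number of distinct pairs (level `mᵢ + mⱼ`, fixed point of `sᵢ sⱼ`), which is bounded by
induction, adding the element `s_T` of highest level to the others. If the other `λᵢ` are all equal
to some `c ≠ λ_T`, the old products (at least `2n - 1` levels, all with fixed point `c`) and the
`2n + 1` products involving `s_T` (pairwise distinct, none with fixed point `c`) give `4n`.
Otherwise four products involving `s_T` are new: `s_T²` and one more lie above every old level, and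
two more lie at a level `m_k + m_T` at which all old products have the same fixed point, which
these two avoid.
-/

open Finset Function

section LevelProducts

variable {ι α : Type*}

/-- Abstracts the fixed points: `lam i` is that of `sᵢ` and `φ i j` that of `sᵢ sⱼ`, which lies
strictly between `lam i` and `lam j` and depends on the order of the factors unless
`lam i = lam j`. -/
structure MixingLaw (lam : ι → α) (φ : ι → ι → α) : Prop where
  self_of_eq : ∀ i j, lam i = lam j → φ i j = lam i
  eq_of_left : ∀ i j, φ i j = lam i → lam i = lam j
  eq_of_right : ∀ i j, φ i j = lam j → lam i = lam j
  eq_of_swap : ∀ i j, φ i j = φ j i → lam i = lam j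

variable [DecidableEq α]

def levelProducts (m : ι → ℕ) (φ : ι → ι → α) (A : Finset ι) : Finset (ℕ × α) :=
  image₂ (fun i j => (m i + m j, φ i j)) A A

variable {m : ι → ℕ} {lam : ι → α} {φ : ι → ι → α} {A : Finset ι}

lemma mk_mem_levelProducts {i j : ι} (hi : i ∈ A) (hj : j ∈ A) :
    (m i + m j, φ i j) ∈ levelProducts m φ A :=
  mem_image₂_of_mem hi hj

lemma levelProducts_mono {B : Finset ι} (h : A ⊆ B) :
    levelProducts m φ A ⊆ levelProducts m φ B :=
  image₂_subset h h

lemma notMem_levelProducts_of_lt {n : ℕ} {e : ℕ × α} (hA : ∀ i ∈ A, m i ≤ n)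
    (he : 2 * n < e.1) : e ∉ levelProducts m φ A := by
  intro h
  obtain ⟨i, hi, j, hj, rfl⟩ := mem_image₂.1 h
  have := hA i hi
  have := hA j hj
  dsimp only at he
  omega

lemma two_mul_card_sub_one_le_card_levelProducts (hm : Injective m) (hA : A.Nonempty) :
    2 * #A - 1 ≤ #(levelProducts m φ A) :=
  calc 2 * #A - 1 = #(A.image m) + #(A.image m) - 1 := by
        rw [card_image_of_injective _ hm, two_mul]
    _ ≤ #(A.image m + A.image m) :=
      cauchy_davenport_add_of_linearOrder_isCancelAdd (hA.image m) (hA.image m)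
    _ = #((levelProducts m φ A).image Prod.fst) := by
      rw [levelProducts, image_image₂_distrib (g := Prod.fst) (f' := (· + ·)) fun _ _ => rfl]; rfl
    _ ≤ #(levelProducts m φ A) := card_image_le

lemma snd_eq_of_mem_levelProducts (hφ : MixingLaw lam φ) {k T : ι} {c : α}
    (hT : ∀ i ∈ A, m i < m T) (habove : ∀ i ∈ A, m k < m i → lam i = c) {e : ℕ × α}
    (he : e ∈ levelProducts m φ A) (hlevel : e.1 = m k + m T) : e.2 = c := by
  obtain ⟨i, hi, j, hj, rfl⟩ := mem_image₂.1 he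
  have := hT i hi
  have := hT j hj
  dsimp only at hlevel ⊢
  have hi' := habove i hi (by omega)
  exact (hφ.self_of_eq i j (hi'.trans (habove j hj (by omega)).symm)).trans hi'

lemma four_mul_card_le_card_levelProducts_insert [DecidableEq ι] (hφ : MixingLaw lam φ)
    (hm : Injective m) {T : ι} {c : α} (hA : A.Nonempty) (hTA : T ∉ A) (hc : ∀ i ∈ A, lam i = c)
    (hTc : lam T ≠ c) : 4 * #A ≤ #(levelProducts m φ (insert T A)) := by
  -- `X₁ ∪ X₂` are the products with a factor `T`: pairwise distinct, and none has value `c`.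
  set X₁ := (insert T A).image fun k => (m k + m T, φ k T)
  set X₂ := A.image fun k => (m T + m k, φ T k)
  have hX₁ : #X₁ = #A + 1 := by
    rw [card_image_of_injective _ fun k l h => hm (add_right_cancel (congrArg Prod.fst h)),
      card_insert_of_notMem hTA]
  have hX₂ : #X₂ = #A :=
    card_image_of_injective _ fun k l h => hm (add_left_cancel (congrArg Prod.fst h))
  have hX₁₂ : Disjoint X₁ X₂ := by
    refine disjoint_left.2 ?_
    simp only [X₁, X₂, mem_image]
    rintro _ ⟨k, -, rfl⟩ ⟨l, hl, h⟩
    obtain ⟨hlevel, hval⟩ := Prod.ext_iff.1 h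
    obtain rfl : l = k := hm (by dsimp only at hlevel; omega)
    exact hTc ((hφ.eq_of_swap T l hval).trans (hc l hl))
  have hold : Disjoint (X₁ ∪ X₂) (levelProducts m φ A) := by
    refine disjoint_left.2 fun e he hold => ?_
    obtain ⟨i, hi, j, hj, rfl⟩ := mem_image₂.1 hold
    have hij : φ i j = c := (hφ.self_of_eq i j ((hc i hi).trans (hc j hj).symm)).trans (hc i hi)
    simp only [X₁, X₂, mem_union, mem_image, mem_insert, Prod.ext_iff] at he
    rcases he with ⟨k, rfl | hk, -, hk'⟩ | ⟨k, hk, -, hk'⟩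
    · exact hTc ((hφ.self_of_eq k k rfl).symm.trans (hk'.trans hij))
    · exact hTc ((hφ.eq_of_left k T (hk'.trans (hij.trans (hc k hk).symm))).symm.trans (hc k hk))
    · exact hTc ((hφ.eq_of_right T k (hk'.trans (hij.trans (hc k hk).symm))).trans (hc k hk))
  have hsub : X₁ ∪ X₂ ∪ levelProducts m φ A ⊆ levelProducts m φ (insert T A) := by
    refine union_subset (union_subset ?_ ?_) (levelProducts_mono (subset_insert T A)) <;>
      simp only [X₁, X₂, image_subset_iff]
    · exact fun k hk => mk_mem_levelProducts hk (mem_insert_self T A)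
    · exact fun k hk => mk_mem_levelProducts (mem_insert_self T A) (mem_insert_of_mem hk)
  have hcard := card_le_card hsub
  rw [card_union_of_disjoint hold, card_union_of_disjoint hX₁₂, hX₁, hX₂] at hcard
  have := two_mul_card_sub_one_le_card_levelProducts (φ := φ) hm hA
  have := hA.card_pos
  omega

lemma four_le_card_of_fst_ne {s : Finset (ℕ × α)} {e₁ e₂ e₃ e₄ : ℕ × α}
    (h₁ : e₁ ∈ s) (h₂ : e₂ ∈ s) (h₃ : e₃ ∈ s) (h₄ : e₄ ∈ s) (h₁₂ : e₁.1 ≠ e₂.1)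
    (h₁₃ : e₁.1 ≠ e₃.1) (h₂₃ : e₂.1 ≠ e₃.1) (h₃₄ : e₃.1 = e₄.1) (h₃₄' : e₃ ≠ e₄) : 4 ≤ #s := by
  have hne : ∀ {e e' : ℕ × α}, e.1 ≠ e'.1 → e ≠ e' := fun h h' => h (congrArg Prod.fst h')
  calc 4 = #{e₁, e₂, e₃, e₄} := by
        rw [card_insert_of_notMem, card_insert_of_notMem, card_pair h₃₄'] <;>
          simp only [mem_insert, mem_singleton, not_or]
        · exact ⟨hne h₂₃, hne (h₃₄ ▸ h₂₃)⟩
        · exact ⟨hne h₁₂, hne h₁₃, hne (h₃₄ ▸ h₁₃)⟩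
    _ ≤ #s := card_le_card (by simp [insert_subset_iff, *])

lemma four_le_card_levelProducts_sdiff_of_eq [DecidableEq ι] (hφ : MixingLaw lam φ)
    (hm : Injective m) {P T : ι} (hP : P ∈ A) (hPmax : ∀ i ∈ A, m i ≤ m P)
    (hT : ∀ i ∈ A, m i < m T) (hPT : lam P = lam T) (hA : ∃ i ∈ A, lam i ≠ lam T) :
    4 ≤ #(levelProducts m φ (insert T A) \ levelProducts m φ A) := by
  obtain ⟨k, hk, hkmax⟩ := exists_max_image (A.filter (lam · ≠ lam T)) m
    (by simpa [Finset.Nonempty] using hA)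
  rw [mem_filter] at hk
  -- `k` is the highest index with `lam k ≠ lam T`, so every old product at level `m k + m T` has
  -- value `lam T`, unlike the products of `(k, T)` and `(T, k)`.
  have habove : ∀ i ∈ A, m k < m i → lam i = lam T := fun i hi hki =>
    by_contra fun h => (hkmax i (mem_filter.2 ⟨hi, h⟩)).not_gt hki
  have hkP : m k < m P := (hPmax k hk.1).lt_of_ne (hm.ne fun h => hk.2 (h ▸ hPT))
  have hkT := hT k hk.1
  have hPT' := hT P hP
  have hnew : ∀ {i j}, i ∈ insert T A → j ∈ insert T A →
      (m i + m j, φ i j) ∉ levelProducts m φ A →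
      (m i + m j, φ i j) ∈ levelProducts m φ (insert T A) \ levelProducts m φ A :=
    fun hi hj h => mem_sdiff.2 ⟨mk_mem_levelProducts hi hj, h⟩
  have hTA := mem_insert_self T A
  refine four_le_card_of_fst_ne (hnew hTA hTA ?_) (hnew (mem_insert_of_mem hP) hTA ?_)
    (hnew (mem_insert_of_mem hk.1) hTA ?_) (hnew hTA (mem_insert_of_mem hk.1) ?_)
    (by dsimp only; omega) (by dsimp only; omega) (by dsimp only; omega) (add_comm _ _)
    fun h => hk.2 (hφ.eq_of_swap k T (Prod.ext_iff.1 h).2)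
  · exact notMem_levelProducts_of_lt hPmax (by dsimp only; omega)
  · exact notMem_levelProducts_of_lt hPmax (by dsimp only; omega)
  · exact fun h => hk.2 (hφ.eq_of_right k T (snd_eq_of_mem_levelProducts hφ hT habove h rfl))
  · exact fun h => hk.2 (hφ.eq_of_left T k
      (snd_eq_of_mem_levelProducts hφ hT habove h (add_comm _ _))).symm

lemma four_le_card_levelProducts_sdiff_of_ne [DecidableEq ι] (hφ : MixingLaw lam φ)
    (hm : Injective m) {P T : ι} (hP : P ∈ A) (hPmax : ∀ i ∈ A, m i ≤ m P)
    (hT : ∀ i ∈ A, m i < m T) (hPT : lam P ≠ lam T) (hA : (A.erase P).Nonempty) :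
    4 ≤ #(levelProducts m φ (insert T A) \ levelProducts m φ A) := by
  obtain ⟨Q, hQ, hQmax⟩ := exists_max_image (A.erase P) m hA
  rw [mem_erase] at hQ
  have habove : ∀ i ∈ A, m Q < m i → lam i = lam P := fun i hi hQi => by
    obtain rfl : i = P := by_contra fun h => (hQmax i (mem_erase.2 ⟨h, hi⟩)).not_gt hQi
    rfl
  have hQP : m Q < m P := (hPmax Q hQ.2).lt_of_ne (hm.ne hQ.1)
  have hQT := hT Q hQ.2
  have hPT' := hT P hP
  have hTA := mem_insert_self T A
  have hnew : ∀ {i j}, i ∈ insert T A → j ∈ insert T A →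
      (m i + m j, φ i j) ∉ levelProducts m φ A →
      (m i + m j, φ i j) ∈ levelProducts m φ (insert T A) \ levelProducts m φ A :=
    fun hi hj h => mem_sdiff.2 ⟨mk_mem_levelProducts hi hj, h⟩
  -- The only old product at level `m Q + m T` is the one of `(P, P)`, with value `lam P`.
  obtain ⟨e, he, hlevel⟩ : ∃ e ∈ levelProducts m φ (insert T A) \ levelProducts m φ A,
      e.1 = m Q + m T := by
    have hQ' : Q ∈ insert T A := mem_insert_of_mem hQ.2
    by_cases hQTP : φ Q T = lam P
    · refine ⟨_, hnew hTA hQ' fun h => ?_, add_comm _ _⟩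
      have hφTQ := snd_eq_of_mem_levelProducts hφ hT habove h (add_comm _ _)
      have hQT := hφ.eq_of_swap Q T (hQTP.trans hφTQ.symm)
      exact hPT (hQTP.symm.trans ((hφ.self_of_eq Q T hQT).trans hQT))
    · exact ⟨_, hnew hQ' hTA fun h =>
        hQTP (snd_eq_of_mem_levelProducts hφ hT habove h rfl), rfl⟩
  refine four_le_card_of_fst_ne (hnew hTA hTA ?_) he (hnew (mem_insert_of_mem hP) hTA ?_)
    (hnew hTA (mem_insert_of_mem hP) ?_) (by omega) (by dsimp only; omega) (by dsimp only; omega)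
    (add_comm _ _) fun h => hPT (hφ.eq_of_swap P T (Prod.ext_iff.1 h).2)
  all_goals exact notMem_levelProducts_of_lt hPmax (by dsimp only; omega)

lemma card_levelProducts_add_four_le [DecidableEq ι] (hφ : MixingLaw lam φ) (hm : Injective m)
    {T : ι} (hT : ∀ i ∈ A, m i < m T) (hA : ∃ i ∈ A, ∃ j ∈ A, lam i ≠ lam j) :
    #(levelProducts m φ A) + 4 ≤ #(levelProducts m φ (insert T A)) := by
  obtain ⟨i, hi, j, hj, hij⟩ := hA
  obtain ⟨P, hP, hPmax⟩ := exists_max_image A m ⟨i, hi⟩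
  rw [← card_sdiff_add_card_eq_card (levelProducts_mono (subset_insert T A)), add_comm]
  gcongr
  by_cases hPT : lam P = lam T
  · refine four_le_card_levelProducts_sdiff_of_eq hφ hm hP hPmax hT hPT ?_
    by_cases hiT : lam i = lam T
    · exact ⟨j, hj, fun h => hij (hiT.trans h.symm)⟩
    · exact ⟨i, hi, hiT⟩
  · refine four_le_card_levelProducts_sdiff_of_ne hφ hm hP hPmax hT hPT ?_
    by_cases hiP : i = P
    · exact ⟨j, mem_erase.2 ⟨fun h => hij (hiP.trans h.symm ▸ rfl), hj⟩⟩
    · exact ⟨i, mem_erase.2 ⟨hiP, hi⟩⟩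

theorem four_mul_card_sub_four_le_card_levelProducts [DecidableEq ι] (hφ : MixingLaw lam φ)
    (hm : Injective m) (A : Finset ι) (hA : ∃ i ∈ A, ∃ j ∈ A, lam i ≠ lam j) :
    4 * #A - 4 ≤ #(levelProducts m φ A) := by
  induction A using Finset.induction_on_max_value m with
  | empty => simp at hA
  | insert T A hTA hTmax ih =>
    have hT : ∀ i ∈ A, m i < m T := fun i hi =>
      (hTmax i hi).lt_of_ne (hm.ne (ne_of_mem_of_not_mem hi hTA))
    rw [card_insert_of_notMem hTA]
    by_cases hA' : ∃ i ∈ A, ∃ j ∈ A, lam i ≠ lam j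
    · have := ih hA'
      have := card_levelProducts_add_four_le hφ hm hT hA'
      omega
    · push Not at hA'
      obtain ⟨k, hk, hkT⟩ : ∃ k ∈ A, lam k ≠ lam T := by
        obtain ⟨i, hi, j, hj, hij⟩ := hA
        by_contra! h
        apply hij
        rcases mem_insert.1 hi with rfl | hi <;> rcases mem_insert.1 hj with rfl | hj <;> simp [*]
      have := four_mul_card_le_card_levelProducts_insert hφ hm ⟨k, hk⟩ hTA
        (fun i hi => hA' i hi k hk) (Ne.symm hkT)
      omega

end LevelProducts

lemma bsa_mul_bsb : bsa 2 * bsb 2 = bsb 2 * bsa 2 ^ 2 :=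
  PresentedGroup.mk_eq_mk_of_mul_inv_mem (by simp [BSRel])

lemma bsa_zpow_mul_bsb (x : ℤ) : bsa 2 ^ x * bsb 2 = bsb 2 * bsa 2 ^ (2 * x) := by
  have hb : SemiconjBy (bsb 2) (bsa 2 ^ 2) (bsa 2) := bsa_mul_bsb.symm
  rw [← (hb.zpow_right x).eq, ← zpow_natCast, ← zpow_mul, Nat.cast_ofNat]

lemma bsa_zpow_mul_bsb_pow (x : ℤ) (n : ℕ) :
    bsa 2 ^ x * bsb 2 ^ n = bsb 2 ^ n * bsa 2 ^ (2 ^ n * x) := by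
  induction n generalizing x with
  | zero => simp
  | succ n ih =>
    rw [pow_succ', ← mul_assoc, bsa_zpow_mul_bsb, mul_assoc, ih, ← mul_assoc, pow_succ,
      mul_assoc (2 ^ n : ℤ)]

def bsPos (M : ℕ) (X : ℤ) : BS 2 := bsb 2 ^ M * bsa 2 ^ X

lemma bsPos_mul_bsPos (M N : ℕ) (X Y : ℤ) :
    bsPos M X * bsPos N Y = bsPos (M + N) (2 ^ N * X + Y) := by
  simp only [bsPos]
  rw [mul_assoc, ← mul_assoc (bsa 2 ^ X), bsa_zpow_mul_bsb_pow, pow_add, zpow_add]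
  group

noncomputable def affineRep : BS 2 →* Equiv.Perm ℚ :=
  PresentedGroup.toGroup
    (f := fun c => if c then Equiv.addRight 1 else Equiv.divRight₀ 2 two_ne_zero)
    (by
      rintro r rfl
      ext q
      simp [Equiv.Perm.mul_apply]
      ring)

lemma affineRep_bsa_zpow (X : ℤ) (q : ℚ) : affineRep (bsa 2 ^ X) q = q + X := by
  simp [affineRep, bsa, PresentedGroup.toGroup.of]

lemma affineRep_bsb_pow (M : ℕ) (q : ℚ) : affineRep (bsb 2 ^ M) q = q / 2 ^ M := by
  induction M generalizing q with
  | zero => simp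
  | succ n ih =>
    rw [pow_succ', map_mul, Equiv.Perm.mul_apply, ih]
    simp [affineRep, bsb, PresentedGroup.toGroup.of, pow_succ, div_div]

lemma affineRep_bsPos (M : ℕ) (X : ℤ) (q : ℚ) : affineRep (bsPos M X) q = (q + X) / 2 ^ M := by
  rw [bsPos, map_mul, Equiv.Perm.mul_apply, affineRep_bsa_zpow, affineRep_bsb_pow]

lemma bsPos_injective : Injective (uncurry bsPos) := by
  rintro ⟨M, X⟩ ⟨N, Y⟩ h
  have h0 := congrArg (fun g => affineRep g 0) h
  have h1 := congrArg (fun g => affineRep g 1) h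
  simp only [uncurry, affineRep_bsPos, zero_add] at h0 h1
  obtain rfl : M = N := by
    rw [add_div, add_div, h0, add_left_inj] at h1
    simpa using h1
  simp_all

-- The fixed point of `affineRep (bsPos M X) : q ↦ (q + X) / 2 ^ M`; junk for `M = 0`.
noncomputable def fixedPoint (M : ℕ) (X : ℤ) : ℚ := X / (2 ^ M - 1)

section FixedPoint

variable {M N : ℕ} (X Y : ℤ)

lemma two_pow_sub_one_ne_zero (hM : 1 ≤ M) : (2 : ℚ) ^ M - 1 ≠ 0 :=
  sub_ne_zero.2 (one_lt_pow₀ one_lt_two (by omega)).ne'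

lemma fixedPoint_injective (hM : 1 ≤ M) : Injective (fixedPoint M) := fun _ _ h => by
  simpa [fixedPoint, div_left_inj' (two_pow_sub_one_ne_zero hM)] using h

lemma eq_iff_eq_of_sub_eq_mul_sub {R : Type*} [Ring R] [NoZeroDivisors R] {a b c d e : R}
    (hc : c ≠ 0)
    (h : a - b = c * (d - e)) : a = b ↔ d = e := by
  rw [← sub_eq_zero, h, mul_eq_zero, or_iff_right hc, sub_eq_zero]

lemma fixedPoint_mul_eq_left_iff (hM : 1 ≤ M) (hN : 1 ≤ N) :
    fixedPoint (M + N) (2 ^ N * X + Y) = fixedPoint M X ↔ fixedPoint M X = fixedPoint N Y := by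
  rw [eq_comm (a := fixedPoint M X)]
  refine eq_iff_eq_of_sub_eq_mul_sub (c := (2 ^ N - 1) / (2 ^ (M + N) - 1))
    (div_ne_zero (two_pow_sub_one_ne_zero hN) (two_pow_sub_one_ne_zero (by omega))) ?_
  simp only [fixedPoint]
  field_simp [two_pow_sub_one_ne_zero hM, two_pow_sub_one_ne_zero hN,
    two_pow_sub_one_ne_zero (show 1 ≤ M + N by omega)]
  push_cast
  ring

lemma fixedPoint_mul_eq_right_iff (hM : 1 ≤ M) (hN : 1 ≤ N) :
    fixedPoint (M + N) (2 ^ N * X + Y) = fixedPoint N Y ↔ fixedPoint M X = fixedPoint N Y := by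
  refine eq_iff_eq_of_sub_eq_mul_sub (c := 2 ^ N * (2 ^ M - 1) / (2 ^ (M + N) - 1))
    (div_ne_zero (mul_ne_zero (by positivity) (two_pow_sub_one_ne_zero hM))
      (two_pow_sub_one_ne_zero (by omega))) ?_
  simp only [fixedPoint]
  field_simp [two_pow_sub_one_ne_zero hM, two_pow_sub_one_ne_zero hN,
    two_pow_sub_one_ne_zero (show 1 ≤ M + N by omega)]
  push_cast
  ring

lemma fixedPoint_mul_eq_swap_iff (hM : 1 ≤ M) (hN : 1 ≤ N) :
    fixedPoint (M + N) (2 ^ N * X + Y) = fixedPoint (N + M) (2 ^ M * Y + X) ↔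
      fixedPoint M X = fixedPoint N Y := by
  refine eq_iff_eq_of_sub_eq_mul_sub (c := (2 ^ M - 1) * (2 ^ N - 1) / (2 ^ (M + N) - 1))
    (div_ne_zero (mul_ne_zero (two_pow_sub_one_ne_zero hM) (two_pow_sub_one_ne_zero hN))
      (two_pow_sub_one_ne_zero (by omega))) ?_
  simp only [fixedPoint, add_comm N M]
  field_simp [two_pow_sub_one_ne_zero hM, two_pow_sub_one_ne_zero hN,
    two_pow_sub_one_ne_zero (show 1 ≤ M + N by omega)]
  push_cast
  ring

end FixedPoint

lemma mixingLaw_fixedPoint {ι : Type*} {m : ι → ℕ} (x : ι → ℤ) (hm : ∀ i, 1 ≤ m i) :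
    MixingLaw (fun i => fixedPoint (m i) (x i))
      (fun i j => fixedPoint (m i + m j) (2 ^ m j * x i + x j)) where
  self_of_eq i j := (fixedPoint_mul_eq_left_iff _ _ (hm i) (hm j)).2
  eq_of_left i j := (fixedPoint_mul_eq_left_iff _ _ (hm i) (hm j)).1
  eq_of_right i j := (fixedPoint_mul_eq_right_iff _ _ (hm i) (hm j)).1
  eq_of_swap i j := (fixedPoint_mul_eq_swap_iff _ _ (hm i) (hm j)).1

lemma commute_bsPos {M N : ℕ} {X Y : ℤ} (hM : 1 ≤ M) (hN : 1 ≤ N)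
    (h : fixedPoint M X = fixedPoint N Y) : Commute (bsPos M X) (bsPos N Y) := by
  have := (fixedPoint_mul_eq_swap_iff X Y hM hN).2 h
  rw [add_comm N M] at this
  rw [Commute, SemiconjBy, bsPos_mul_bsPos, bsPos_mul_bsPos, add_comm N M,
    fixedPoint_injective (by omega) this]

lemma card_levelProducts_fixedPoint_le_card_mul {ι : Type*} (m : ι → ℕ) (x : ι → ℤ)
    (A : Finset ι) :
    #(levelProducts m (fun i j => fixedPoint (m i + m j) (2 ^ m j * x i + x j)) A) ≤
      #((A.image fun i => bsPos (m i) (x i)) * (A.image fun i => bsPos (m i) (x i))) := by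
  set N := image₂ (fun i j => (m i + m j, 2 ^ m j * x i + x j)) A A
  calc #(levelProducts m _ A) = #(N.image fun p => (p.1, fixedPoint p.1 p.2)) := by
        rw [levelProducts, image_image₂]
    _ ≤ #N := card_image_le
    _ = #(N.image (uncurry bsPos)) := (card_image_of_injective _ bsPos_injective).symm
    _ = _ := by
      rw [image_image₂]
      show _ = #(image₂ (· * ·) _ _)
      simp only [image₂_image_left, image₂_image_right, bsPos_mul_bsPos, uncurry]

theorem stmt16_general (t : ℕ) (m : Fin t → ℕ) (x : Fin t → ℤ)
    (hmono : StrictMono m) (hm1 : ∀ i, 1 ≤ m i) (S : Finset (BS 2))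
    (hS : S = Finset.univ.image (fun i => bsb 2 ^ m i * bsa 2 ^ x i))
    (hnab : ¬ IsMulCommutative (Subgroup.closure (S : Set (BS 2)))) :
    4 * (S.card : ℤ) - 4 ≤ ((S * S).card : ℤ) := by
  have hlam : ∃ i ∈ univ, ∃ j ∈ univ, fixedPoint (m i) (x i) ≠ fixedPoint (m j) (x j) := by
    by_contra! h
    refine hnab (Subgroup.isMulCommutative_closure ?_)
    simp only [hS, coe_image, coe_univ, Set.image_univ, Set.forall_mem_range]
    exact fun i j => commute_bsPos (hm1 i) (hm1 j) (h i (mem_univ _) j (mem_univ _))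
  have hcard := four_mul_card_sub_four_le_card_levelProducts (mixingLaw_fixedPoint x hm1)
    hmono.injective univ hlam
  have hSS := hS ▸ card_levelProducts_fixedPoint_le_card_mul m x univ
  have hS_card : #S ≤ t := hS ▸ card_image_le.trans_eq (card_fin t)
  rw [card_fin] at hcard
  omega

theorem stmt16 (t : ℕ) (ht : 2 ≤ t) (m : Fin t → ℕ) (x : Fin t → ℤ)
    (hmono : StrictMono m) (hm1 : ∀ i, 1 ≤ m i) (S : Finset (BS 2))
    (hS : S = Finset.univ.image (fun i => bsb 2 ^ m i * bsa 2 ^ x i))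
    (hnab : ¬ IsMulCommutative (Subgroup.closure (S : Set (BS 2)))) :
    4 * (S.card : ℤ) - 4 ≤ ((S * S).card : ℤ) :=
  stmt16_general t m x hmono hm1 S hS hnab
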